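/- (Tightness criterion for the upcrossing inequality.) Let a < b and let (X_t)_{t∈ℕ} be a P-martingale such that (a) X_t almost surely never assumes any value strictly between a and b, and (b) every upcrossing is completed exactly at b and every downcrossing exactly at a, i.e., X_{T_{2k}} = b and X_{T_{2k+1}} = a whenever these stopping times are finite, for all k ∈ ℕ. Then for every t ∈ ℕ, E[ U_t(a, b) ] = (1/(b − a)) · E[ max{ a − X_t, 0 } ]. -/

import Mathlib

open MeasureTheory Filter Set
open scoped ENNReal

namespace MartOsc

variable {A : Type*} [Fintype A]

/-- The first `t` symbols of the infinite string `v`. -/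
def prefixList (v : ℕ → A) (t : ℕ) : List A := (List.range t).map v

/-- The cylinder set of all infinite strings having the finite string `u` as a prefix. -/
def cylinder (u : List A) : Set (ℕ → A) := {v | prefixList v u.length = u}

/-- The σ-algebra `F_t` generated by the cylinder sets of strings of length `t`. -/
def Ft (A : Type*) (t : ℕ) : MeasurableSpace (ℕ → A) :=
  .generateFrom {S | ∃ u : List A, u.length = t ∧ S = cylinder u}

/-- The σ-algebra `F_∞` generated by all cylinder sets. -/
def Finf (A : Type*) : MeasurableSpace (ℕ → A) :=
  .generateFrom {S | ∃ u : List A, S = cylinder u}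

/-- `(X_t)` is a `P`-martingale w.r.t. the filtration `(F_t)`:
each `X_t` is `F_t`-measurable and `E[X_t | F_s] = X_s` a.s. for `s < t`. -/
def IsMartingale (P : @Measure (ℕ → A) (Finf A)) (X : ℕ → (ℕ → A) → ℝ) : Prop :=
  (∀ t : ℕ, @Measurable _ _ (Ft A t) _ (X t)) ∧
  ∀ s t : ℕ, s < t → MeasureTheory.condExp (Ft A s) P (X t) =ᵐ[P] X s

/-- `(X_t)` is a `P`-submartingale w.r.t. the filtration `(F_t)`. -/
def IsSubmartingale (P : @Measure (ℕ → A) (Finf A)) (X : ℕ → (ℕ → A) → ℝ) : Prop :=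
  (∀ t : ℕ, @Measurable _ _ (Ft A t) _ (X t)) ∧
  ∀ s t : ℕ, s < t → X s ≤ᵐ[P] MeasureTheory.condExp (Ft A s) P (X t)

/-- The crossing times of a sequence `f`:  `T_0 = 0`,
`T_{2k+1} = inf {t > T_{2k} : f t ≤ a}` and `T_{2k+2} = inf {t > T_{2k+1} : f t ≥ b}`. -/
noncomputable def crossT (f : ℕ → ℝ) (a b : ℝ) : ℕ → ℕ∞
  | 0 => 0
  | k + 1 =>
    sInf ((fun n : ℕ => (n : ℕ∞)) ''
      {n : ℕ | crossT f a b k < (n : ℕ∞) ∧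
        (if (k + 1) % 2 = 1 then f n ≤ a else b ≤ f n)})

/-- The number of upcrossings `U_t(a, b) = sup {k ≥ 0 : T_{2k} ≤ t}` up to time `t`. -/
noncomputable def upBefore (f : ℕ → ℝ) (a b : ℝ) (t : ℕ) : ℕ∞ :=
  sSup ((fun k : ℕ => (k : ℕ∞)) '' {k : ℕ | crossT f a b (2 * k) ≤ (t : ℕ∞)})

/-- The total number of upcrossings `U(a, b) = sup_t U_t(a, b)`. -/
noncomputable def upTotal (f : ℕ → ℝ) (a b : ℝ) : ℕ∞ := ⨆ t : ℕ, upBefore f a b t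

/-- The alternation times `T'_{k,ν}` for `ν ∈ {-1, +1}`. -/
noncomputable def altT (f : ℕ → ℝ) (α : ℝ) (ν : ℝ) : ℕ → ℕ∞
  | 0 => 0
  | k + 1 =>
    sInf ((fun n : ℕ => (n : ℕ∞)) ''
      {n : ℕ | altT f α ν k < (n : ℕ∞) ∧
        (if (k + 1) % 2 = 1 then f n ≤ f (altT f α ν k).toNat - ν * α
         else f (altT f α ν k).toNat + ν * α ≤ f n)})

/-- The number of `α`-alternations `A_t(α) = sup {k ≥ 0 : T'_k ≤ t}` up to time `t`,
where `T'_k = min {T'_{k,-1}, T'_{k,+1}}`. -/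
noncomputable def altBefore (f : ℕ → ℝ) (α : ℝ) (t : ℕ) : ℕ∞ :=
  sSup ((fun k : ℕ => (k : ℕ∞)) ''
    {k : ℕ | min (altT f α (-1) k) (altT f α 1 k) ≤ (t : ℕ∞)})

/-- The total number of `α`-alternations `A(α) = sup_t A_t(α)`. -/
noncomputable def altTotal (f : ℕ → ℝ) (α : ℝ) : ℕ∞ := ⨆ t : ℕ, altBefore f α t

/-- `P` has perpetual entropy: there is `ε > 0` such that for every finite string `u` with
`P(Γ_u) > 0` and every infinite string `v` there are `a ∈ Σ` and `t ∈ ℕ` with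
`ε < P(Γ_{u v_{1:t} a} | Γ_{u v_{1:t}}) < 1 - ε`. -/
def PerpetualEntropy (P : @Measure (ℕ → A) (Finf A)) : Prop :=
  ∃ ε : ℝ≥0∞, 0 < ε ∧ ∀ u : List A, 0 < P (cylinder u) → ∀ v : ℕ → A,
    ∃ a : A, ∃ t : ℕ,
      ε < P (cylinder (u ++ prefixList v t ++ [a])) / P (cylinder (u ++ prefixList v t)) ∧
      P (cylinder (u ++ prefixList v t ++ [a])) / P (cylinder (u ++ prefixList v t)) < 1 - ε

/-!
Let `H_t` be the indicator of `t ∈ [T_{2k+1}, T_{2k+2})` for some `k` (Doob's strategy). Under the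
two hypotheses every completed upcrossing of `H` gains exactly `b - a` and the pending one has
lost exactly `(a - X_t)⁺`, so pathwise
`∑_{s<t} H_s (X_{s+1} - X_s) = (b - a) U_t - (a - X_t)⁺`.
Since `H` is predictable, the left side has mean zero. The identity also needs `a ≤ X_0`, which
the crossing times never look at: it holds a.s. because `a ≤ X_1` (a value `≤ a` at time `1` is
the first downcrossing, hence equals `a`) and `X_0 = E[X_1 | F_0]`.
-/

section Crossing

variable {f g : ℕ → ℝ} {a b : ℝ} {j k n s t : ℕ}

theorem crossT_succ_le (hj : crossT f a b j < n)
    (hn : if (j + 1) % 2 = 1 then f n ≤ a else b ≤ f n) : crossT f a b (j + 1) ≤ n :=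
  sInf_le ⟨n, ⟨hj, hn⟩, rfl⟩

theorem crossT_succ_spec (h : crossT f a b (j + 1) = n) :
    crossT f a b j < n ∧ (if (j + 1) % 2 = 1 then f n ≤ a else b ≤ f n) := by
  rw [crossT] at h
  have hne : ((fun n : ℕ => (n : ℕ∞)) '' {n : ℕ | crossT f a b j < (n : ℕ∞) ∧
      (if (j + 1) % 2 = 1 then f n ≤ a else b ≤ f n)}).Nonempty := by
    by_contra hempty
    rw [Set.not_nonempty_iff_eq_empty.1 hempty, sInf_empty] at h
    exact ENat.top_ne_natCast n h
  obtain ⟨m, hm, hmn⟩ := csInf_mem hne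
  rw [h, Nat.cast_inj] at hmn
  exact hmn ▸ hm

theorem crossT_odd_le (hk : crossT f a b (2 * k) < n) (hn : f n ≤ a) :
    crossT f a b (2 * k + 1) ≤ n :=
  crossT_succ_le hk (by simpa [Nat.add_mod] using hn)

theorem crossT_even_le (hk : crossT f a b (2 * k + 1) < n) (hn : b ≤ f n) :
    crossT f a b (2 * k + 2) ≤ n :=
  crossT_succ_le hk (by simpa [Nat.add_mod] using hn)

theorem crossT_le_crossT_succ (j : ℕ) : crossT f a b j ≤ crossT f a b (j + 1) := by
  cases h : crossT f a b (j + 1) using ENat.recTopCoe with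
  | top => exact le_top
  | coe m => exact (crossT_succ_spec h).1.le

theorem crossT_mono : Monotone (crossT f a b) :=
  monotone_nat_of_le_succ crossT_le_crossT_succ

theorem coe_lt_crossT_succ (h : (n : ℕ∞) ≤ crossT f a b j) :
    (n : ℕ∞) < crossT f a b (j + 1) := by
  cases h' : crossT f a b (j + 1) using ENat.recTopCoe with
  | top => exact ENat.natCast_lt_top n
  | coe m => exact h.trans_lt (crossT_succ_spec h').1

theorem le_crossT (j : ℕ) : (j : ℕ∞) ≤ crossT f a b j := by
  induction j with
  | zero => exact le_rfl
  | succ j ih => exact_mod_cast Order.add_one_le_of_lt (coe_lt_crossT_succ ih)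

/-- `U_t(a, b)` as a natural number; since `2 k ≤ T_{2k}`, the search can stop at `t`. -/
noncomputable def upcrossingCount (f : ℕ → ℝ) (a b : ℝ) (t : ℕ) : ℕ :=
  Nat.findGreatest (fun k => crossT f a b (2 * k) ≤ t) t

theorem crossT_two_mul_le_iff : crossT f a b (2 * k) ≤ t ↔ k ≤ upcrossingCount f a b t := by
  constructor
  · intro hk
    have : 2 * k ≤ t := by exact_mod_cast (le_crossT (2 * k)).trans hk
    exact Nat.le_findGreatest (by omega) hk
  · intro hk
    have hN : crossT f a b (2 * upcrossingCount f a b t) ≤ t :=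
      Nat.findGreatest_spec (P := fun k => crossT f a b (2 * k) ≤ t) (Nat.zero_le t) bot_le
    exact (crossT_mono (by omega)).trans hN

theorem upBefore_eq_upcrossingCount : upBefore f a b t = upcrossingCount f a b t := by
  refine le_antisymm (sSup_le ?_) (le_sSup ⟨_, crossT_two_mul_le_iff.2 le_rfl, rfl⟩)
  rintro _ ⟨k, hk, rfl⟩
  show (k : ℕ∞) ≤ _
  exact_mod_cast crossT_two_mul_le_iff.1 hk

theorem crossT_two_mul_upcrossingCount_le : crossT f a b (2 * upcrossingCount f a b t) ≤ t :=
  crossT_two_mul_le_iff.2 le_rfl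

theorem lt_crossT_two_mul_upcrossingCount_add_two :
    (t : ℕ∞) < crossT f a b (2 * upcrossingCount f a b t + 2) :=
  not_le.1 fun h => by
    have := crossT_two_mul_le_iff.1 (h.trans_eq' (by rw [mul_add_one]))
    omega

theorem two_mul_upcrossingCount_le : 2 * upcrossingCount f a b t ≤ t := by
  exact_mod_cast (le_crossT _).trans (crossT_two_mul_upcrossingCount_le (f := f) (a := a) (b := b))

theorem upcrossingCount_succ_of_lt
    (h : ((t + 1 : ℕ) : ℕ∞) < crossT f a b (2 * upcrossingCount f a b t + 2)) :
    upcrossingCount f a b (t + 1) = upcrossingCount f a b t := by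
  refine le_antisymm ?_ (crossT_two_mul_le_iff.1 (crossT_two_mul_upcrossingCount_le.trans ?_))
  · by_contra! hlt
    have h2 := crossT_two_mul_le_iff.2 (Nat.succ_le_of_lt hlt)
    rw [Nat.succ_eq_add_one, mul_add_one] at h2
    exact absurd h (not_lt.2 h2)
  · exact_mod_cast t.le_succ

theorem upcrossingCount_succ_of_eq
    (h : crossT f a b (2 * upcrossingCount f a b t + 2) = ((t + 1 : ℕ) : ℕ∞)) :
    upcrossingCount f a b (t + 1) = upcrossingCount f a b t + 1 := by
  refine le_antisymm ?_ (crossT_two_mul_le_iff.1 h.le)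
  by_contra! hlt
  have h4 : crossT f a b (2 * (upcrossingCount f a b t + 2)) ≤ (t + 1 : ℕ) :=
    crossT_two_mul_le_iff.2 hlt
  have h3 : ((t + 1 : ℕ) : ℕ∞) < crossT f a b (2 * upcrossingCount f a b t + 3) :=
    coe_lt_crossT_succ h.ge
  exact absurd h4 (not_le.2 (h3.trans_le (crossT_le_crossT_succ _)))

/-- `t ∈ [T_{2k+1}, T_{2k+2})` for some `k`. -/
def InUpcrossing (f : ℕ → ℝ) (a b : ℝ) (t : ℕ) : Prop :=
  crossT f a b (2 * upcrossingCount f a b t + 1) ≤ t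

theorem le_apply_of_crossT_lt_of_le_crossT
    (hdown : ∀ k n : ℕ, crossT f a b (2 * k + 1) = n → f n = a)
    (h₁ : crossT f a b (2 * k) < n) (h₂ : (n : ℕ∞) ≤ crossT f a b (2 * k + 1)) :
    a ≤ f n := by
  by_contra! hn
  have := hdown k n (le_antisymm (crossT_odd_le h₁ hn.le) h₂)
  linarith

theorem le_apply_of_crossT_eq (hab : a < b) (h0 : a ≤ f 0)
    (hup : ∀ k n : ℕ, crossT f a b (2 * k + 2) = n → f n = b)
    (h : crossT f a b (2 * k) = n) : a ≤ f n := by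
  cases k with
  | zero =>
    have h' : (n : ℕ∞) = 0 := h.symm
    obtain rfl : n = 0 := by exact_mod_cast h'
    exact h0
  | succ k => exact (hup k n h).symm ▸ hab.le

theorem le_apply_of_not_inUpcrossing (hab : a < b) (h0 : a ≤ f 0)
    (hdown : ∀ k n : ℕ, crossT f a b (2 * k + 1) = n → f n = a)
    (hup : ∀ k n : ℕ, crossT f a b (2 * k + 2) = n → f n = b)
    (ht : ¬ InUpcrossing f a b t) : a ≤ f t := by
  rcases crossT_two_mul_upcrossingCount_le.lt_or_eq with hlt | heq
  · exact le_apply_of_crossT_lt_of_le_crossT hdown hlt (not_le.1 ht).le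
  · exact le_apply_of_crossT_eq hab h0 hup heq

theorem apply_le_of_inUpcrossing (hgap : ∀ s, f s ≤ a ∨ b ≤ f s)
    (hdown : ∀ k n : ℕ, crossT f a b (2 * k + 1) = n → f n = a)
    (ht : InUpcrossing f a b t) : f t ≤ a := by
  rcases ht.lt_or_eq with hlt | heq
  · refine (hgap t).resolve_right fun hb => ?_
    exact absurd lt_crossT_two_mul_upcrossingCount_add_two (not_lt.2 (crossT_even_le hlt hb))
  · exact (hdown _ t heq).le

theorem le_apply_one (hdown : ∀ k n : ℕ, crossT f a b (2 * k + 1) = n → f n = a) :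
    a ≤ f 1 :=
  le_apply_of_crossT_lt_of_le_crossT (k := 0) hdown (by exact_mod_cast zero_lt_one) (le_crossT 1)

theorem inUpcrossing_increment_eq (hab : a < b) (h0 : a ≤ f 0)
    (hgap : ∀ s, f s ≤ a ∨ b ≤ f s)
    (hdown : ∀ k n : ℕ, crossT f a b (2 * k + 1) = n → f n = a)
    (hup : ∀ k n : ℕ, crossT f a b (2 * k + 2) = n → f n = b) (t : ℕ) :
    {s | InUpcrossing f a b s}.indicator (fun s => f (s + 1) - f s) t =
      (b - a) * ((upcrossingCount f a b (t + 1) : ℝ) - upcrossingCount f a b t)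
        - max (a - f (t + 1)) 0 + max (a - f t) 0 := by
  have htT : (t : ℕ∞) < crossT f a b (2 * upcrossingCount f a b t + 2) :=
    lt_crossT_two_mul_upcrossingCount_add_two
  have htt : (t : ℕ∞) < (t + 1 : ℕ) := by exact_mod_cast t.lt_succ_self
  by_cases ht : InUpcrossing f a b t
  · have hft : f t ≤ a := apply_le_of_inUpcrossing hgap hdown ht
    rw [Set.indicator_of_mem (show t ∈ {s | InUpcrossing f a b s} from ht),
      max_eq_left (show 0 ≤ a - f t by linarith)]
    rcases hgap (t + 1) with hlow | hhigh
    · have hlt : ((t + 1 : ℕ) : ℕ∞) < crossT f a b (2 * upcrossingCount f a b t + 2) := by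
        refine lt_of_le_of_ne (Order.add_one_le_of_lt htT) fun heq => ?_
        have := hup _ _ heq.symm
        linarith
      rw [upcrossingCount_succ_of_lt hlt, max_eq_left (show 0 ≤ a - f (t + 1) by linarith)]
      ring
    · have heq : crossT f a b (2 * upcrossingCount f a b t + 2) = (t + 1 : ℕ) :=
        le_antisymm (crossT_even_le (ht.trans_lt htt) hhigh) (Order.add_one_le_of_lt htT)
      rw [upcrossingCount_succ_of_eq heq, hup _ _ heq, max_eq_right (show a - b ≤ 0 by linarith)]
      push_cast
      ring
  · have hft : a ≤ f t := le_apply_of_not_inUpcrossing hab h0 hdown hup ht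
    have hlt : (t : ℕ∞) < crossT f a b (2 * upcrossingCount f a b t + 1) := not_le.1 ht
    have hft' : a ≤ f (t + 1) := le_apply_of_crossT_lt_of_le_crossT hdown
      (crossT_two_mul_upcrossingCount_le.trans_lt htt) (Order.add_one_le_of_lt hlt)
    rw [Set.indicator_of_notMem (show t ∉ {s | InUpcrossing f a b s} from ht),
      upcrossingCount_succ_of_lt (coe_lt_crossT_succ (Order.add_one_le_of_lt hlt)),
      max_eq_right (show a - f (t + 1) ≤ 0 by linarith),
      max_eq_right (show a - f t ≤ 0 by linarith)]
    ring

theorem sum_inUpcrossing_increment_eq (hab : a < b) (h0 : a ≤ f 0)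
    (hgap : ∀ s, f s ≤ a ∨ b ≤ f s)
    (hdown : ∀ k n : ℕ, crossT f a b (2 * k + 1) = n → f n = a)
    (hup : ∀ k n : ℕ, crossT f a b (2 * k + 2) = n → f n = b) (t : ℕ) :
    ∑ s ∈ Finset.range t, {s | InUpcrossing f a b s}.indicator (fun s => f (s + 1) - f s) s =
      (b - a) * upcrossingCount f a b t - max (a - f t) 0 := by
  refine Finset.sum_range_induction _ (fun t => (b - a) * upcrossingCount f a b t - max (a - f t) 0)
    ?_ t fun s _ => ?_
  · have : upcrossingCount f a b 0 = 0 := by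
      simpa using two_mul_upcrossingCount_le (f := f) (a := a) (b := b) (t := 0)
    simp [this, h0]
  · rw [inUpcrossing_increment_eq hab h0 hgap hdown hup s]
    ring

theorem crossT_eq_of_eqOn (h : ∀ n ≤ s, f n = g n) (hj : crossT f a b j ≤ s) :
    crossT g a b j = crossT f a b j := by
  induction j with
  | zero => rfl
  | succ j ih =>
    obtain ⟨n, hn⟩ := ENat.ne_top_iff_exists.1 (ne_top_of_le_ne_top (ENat.natCast_ne_top s) hj)
    have hns : n ≤ s := by exact_mod_cast hn ▸ hj
    obtain ⟨hfj, hfn⟩ := crossT_succ_spec hn.symm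
    rw [h n hns] at hfn
    have hgj := ih (hfj.le.trans (by exact_mod_cast hns))
    have hgn : crossT g a b (j + 1) ≤ n := crossT_succ_le (hgj ▸ hfj) hfn
    obtain ⟨m, hm⟩ := ENat.ne_top_iff_exists.1 (ne_top_of_le_ne_top (ENat.natCast_ne_top n) hgn)
    have hmn : m ≤ n := by exact_mod_cast hm ▸ hgn
    obtain ⟨hgj', hgm⟩ := crossT_succ_spec hm.symm
    rw [← h m (hmn.trans hns)] at hgm
    have hfm : crossT f a b (j + 1) ≤ m := crossT_succ_le (hgj ▸ hgj') hgm
    exact le_antisymm (hgn.trans_eq hn) (hfm.trans_eq hm)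

theorem crossT_le_iff_of_eqOn (h : ∀ n ≤ s, f n = g n) :
    crossT f a b j ≤ s ↔ crossT g a b j ≤ s :=
  ⟨fun hj => (crossT_eq_of_eqOn h hj).symm ▸ hj,
    fun hj => (crossT_eq_of_eqOn (fun n hn => (h n hn).symm) hj).symm ▸ hj⟩

theorem upcrossingCount_eq_of_eqOn (h : ∀ n ≤ t, f n = g n) :
    upcrossingCount f a b t = upcrossingCount g a b t :=
  le_antisymm
    (crossT_two_mul_le_iff.1 ((crossT_le_iff_of_eqOn h).1 crossT_two_mul_upcrossingCount_le))
    (crossT_two_mul_le_iff.1 ((crossT_le_iff_of_eqOn h).2 crossT_two_mul_upcrossingCount_le))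

theorem inUpcrossing_iff_of_eqOn (h : ∀ n ≤ t, f n = g n) :
    InUpcrossing f a b t ↔ InUpcrossing g a b t := by
  rw [InUpcrossing, InUpcrossing, upcrossingCount_eq_of_eqOn h, crossT_le_iff_of_eqOn h]

end Crossing

section Cylinder

variable {A : Type*} {s t : ℕ}

theorem prefixList_take (v : ℕ → A) (hst : s ≤ t) :
    (prefixList v t).take s = prefixList v s := by
  rw [prefixList, prefixList, ← List.map_take, List.take_range, min_eq_left hst]

theorem Ft_eq_comap_prefixList [Countable A] (t : ℕ) :
    Ft A t = (⊤ : MeasurableSpace (List A)).comap (prefixList · t) := by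
  refine le_antisymm (MeasurableSpace.generateFrom_le ?_)
    (MeasurableSpace.comap_le_iff_le_map.2 fun S _ => ?_)
  · rintro _ ⟨u, rfl, rfl⟩
    exact ⟨{u}, trivial, rfl⟩
  · change MeasurableSet[Ft A t] ((prefixList · t) ⁻¹' S)
    rw [← Set.biUnion_preimage_singleton]
    refine MeasurableSet.biUnion S.to_countable fun u _ => ?_
    by_cases hu : u.length = t
    · exact MeasurableSpace.measurableSet_generateFrom ⟨u, hu, by subst hu; rfl⟩
    · convert MeasurableSet.empty
      ext v
      simp only [Set.mem_preimage, Set.mem_singleton_iff, Set.mem_empty_iff_false, iff_false]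
      rintro rfl
      simp [prefixList] at hu

theorem measurable_Ft_iff [Countable A] {β : Type*} [MeasurableSpace β]
    [MeasurableSingletonClass β] [Nonempty β] {g : (ℕ → A) → β} :
    Measurable[Ft A t] g ↔ g.FactorsThrough (prefixList · t) := by
  let : MeasurableSpace (List A) := ⊤
  rw [Ft_eq_comap_prefixList]
  refine ⟨fun hg => hg.factorsThrough, fun hg => ?_⟩
  obtain ⟨e, rfl⟩ := (Function.factorsThrough_iff g).1 hg
  exact measurable_from_top.comp (comap_measurable _)

theorem Ft_le_Finf (t : ℕ) : Ft A t ≤ Finf A :=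
  MeasurableSpace.generateFrom_mono fun _ ⟨u, _, hS⟩ => ⟨u, hS⟩

variable [Countable A] {X : ℕ → (ℕ → A) → ℝ}

theorem apply_eq_of_prefixList_eq (hX : ∀ t, Measurable[Ft A t] (X t)) {v w : ℕ → A}
    (hvw : prefixList v t = prefixList w t) : ∀ s ≤ t, X s v = X s w := fun s hs =>
  measurable_Ft_iff.1 (hX s) (show prefixList v s = prefixList w s by
    rw [← prefixList_take v hs, hvw, prefixList_take w hs])

theorem measurable_upcrossingCount (hX : ∀ t, Measurable[Ft A t] (X t)) (a b : ℝ) (t : ℕ) :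
    Measurable[Ft A t] fun v => (upcrossingCount (fun s => X s v) a b t : ℝ) :=
  measurable_Ft_iff.2 fun _ _ hvw =>
    congrArg Nat.cast (upcrossingCount_eq_of_eqOn (apply_eq_of_prefixList_eq hX hvw))

theorem measurableSet_inUpcrossing (hX : ∀ t, Measurable[Ft A t] (X t)) (a b : ℝ) (t : ℕ) :
    MeasurableSet[Ft A t] {v | InUpcrossing (fun s => X s v) a b t} :=
  (@measurableSet_setOfPred _ (Ft A t) _).2 <| measurable_Ft_iff.2 fun _ _ hvw =>
    propext (inUpcrossing_iff_of_eqOn (apply_eq_of_prefixList_eq hX hvw))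

end Cylinder

section Expectation

variable {A : Type*} {P : @Measure (ℕ → A) (Finf A)} {X : ℕ → (ℕ → A) → ℝ}

theorem IsMartingale.integrable (hX : IsMartingale P X) (t : ℕ) : Integrable (X t) P :=
  integrable_condExp.congr (hX.2 t (t + 1) t.lt_succ_self)

theorem IsMartingale.setIntegral_succ_sub_eq_zero [IsFiniteMeasure P] (hX : IsMartingale P X)
    {s : ℕ} {E : Set (ℕ → A)} (hE : MeasurableSet[Ft A s] E) :
    ∫ v in E, (X (s + 1) v - X s v) ∂P = 0 := by
  rw [integral_sub (hX.integrable _).integrableOn (hX.integrable _).integrableOn, sub_eq_zero,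
    ← setIntegral_condExp (Ft_le_Finf s) (hX.integrable _) hE]
  exact integral_congr_ae (ae_restrict_of_ae (hX.2 s (s + 1) s.lt_succ_self))

theorem IsMartingale.integral_sum_indicator_sub_eq_zero [IsFiniteMeasure P] (hX : IsMartingale P X)
    {E : ℕ → Set (ℕ → A)} (hE : ∀ s, MeasurableSet[Ft A s] (E s)) (t : ℕ) :
    ∫ v, ∑ s ∈ Finset.range t, (E s).indicator (fun v => X (s + 1) v - X s v) v ∂P = 0 := by
  have hint : ∀ s, Integrable ((E s).indicator fun v => X (s + 1) v - X s v) P := fun s =>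
    ((hX.integrable _).sub (hX.integrable _)).indicator (Ft_le_Finf s _ (hE s))
  rw [integral_finsetSum _ fun s _ => hint s]
  refine Finset.sum_eq_zero fun s _ => ?_
  rw [integral_indicator (Ft_le_Finf s _ (hE s))]
  exact hX.setIntegral_succ_sub_eq_zero (hE s)

theorem IsMartingale.ae_le_of_ae_le [IsFiniteMeasure P] (hX : IsMartingale P X) {s t : ℕ}
    (hst : s < t) {c : ℝ} (h : ∀ᵐ v ∂P, c ≤ X t v) : ∀ᵐ v ∂P, c ≤ X s v := by
  have hmono := condExp_mono (m := Ft A s) (integrable_const c) (hX.integrable t) h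
  rw [condExp_const (Ft_le_Finf s)] at hmono
  filter_upwards [hX.2 s t hst, hmono] with v hv hcv
  exact hv ▸ hcv

theorem integrable_upcrossingCount [Countable A] [IsFiniteMeasure P]
    (hX : ∀ t, Measurable[Ft A t] (X t)) (a b : ℝ) (t : ℕ) :
    Integrable (fun v => (upcrossingCount (fun s => X s v) a b t : ℝ)) P := by
  refine (integrable_const (t : ℝ)).mono'
    ((measurable_upcrossingCount hX a b t).mono (Ft_le_Finf t) le_rfl).aestronglyMeasurable
    (ae_of_all _ fun v => ?_)
  have := two_mul_upcrossingCount_le (f := fun s => X s v) (a := a) (b := b) (t := t)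
  rw [Real.norm_natCast]
  exact_mod_cast (by omega : upcrossingCount (fun s => X s v) a b t ≤ t)

theorem lintegral_upBefore_eq_ofReal_integral [Countable A] [IsFiniteMeasure P]
    (hX : ∀ t, Measurable[Ft A t] (X t)) (a b : ℝ) (t : ℕ) :
    ∫⁻ v, ENat.toENNReal (upBefore (fun s => X s v) a b t) ∂P =
      ENNReal.ofReal (∫ v, (upcrossingCount (fun s => X s v) a b t : ℝ) ∂P) := by
  rw [ofReal_integral_eq_lintegral_ofReal (integrable_upcrossingCount hX a b t)
    (ae_of_all _ fun _ => Nat.cast_nonneg _)]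
  simp only [upBefore_eq_upcrossingCount, ENat.toENNReal_coe, ENNReal.ofReal_natCast]

end Expectation

theorem tightness_criterion_general {A : Type*} [Fintype A]
    (P : @Measure (ℕ → A) (Finf A)) (hP : IsProbabilityMeasure P)
    (a b : ℝ) (hab : a < b)
    (X : ℕ → (ℕ → A) → ℝ) (hX : IsMartingale P X)
    (hgap : ∀ᵐ v ∂P, ∀ t : ℕ, X t v ≤ a ∨ b ≤ X t v)
    (hcross : ∀ᵐ v ∂P, ∀ k n : ℕ,
      (crossT (fun s => X s v) a b (2 * k + 1) = (n : ℕ∞) → X n v = a) ∧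
      (crossT (fun s => X s v) a b (2 * k + 2) = (n : ℕ∞) → X n v = b)) :
    ∀ t : ℕ,
      ∫⁻ v, ENat.toENNReal (upBefore (fun s => X s v) a b t) ∂P =
        ENNReal.ofReal ((1 / (b - a)) * ∫ v, max (a - X t v) 0 ∂P) := by
  intro t
  have hX0 : ∀ᵐ v ∂P, a ≤ X 0 v :=
    hX.ae_le_of_ae_le zero_lt_one (hcross.mono fun v hv => le_apply_one fun k n => (hv k n).1)
  have hpath : (fun v => ∑ s ∈ Finset.range t,
      {v | InUpcrossing (fun s => X s v) a b s}.indicator (fun v => X (s + 1) v - X s v) v)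
      =ᵐ[P] fun v => (b - a) * upcrossingCount (fun s => X s v) a b t - max (a - X t v) 0 := by
    filter_upwards [hgap, hcross, hX0] with v hgap hcross hX0
    exact sum_inUpcrossing_increment_eq hab hX0 hgap (fun k n => (hcross k n).1)
      (fun k n => (hcross k n).2) t
  have hmean : (b - a) * ∫ v, (upcrossingCount (fun s => X s v) a b t : ℝ) ∂P =
      ∫ v, max (a - X t v) 0 ∂P := by
    have h := (integral_congr_ae hpath).symm.trans
      (hX.integral_sum_indicator_sub_eq_zero (fun s => measurableSet_inUpcrossing hX.1 a b s) t)
    have hpos : Integrable (fun v => max (a - X t v) 0) P :=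
      ((integrable_const a).sub (hX.integrable t)).pos_part
    rwa [integral_sub ((integrable_upcrossingCount hX.1 a b t).const_mul _) hpos,
      integral_const_mul, sub_eq_zero] at h
  rw [lintegral_upBefore_eq_ofReal_integral hX.1 a b t, ← hmean, one_div,
    inv_mul_cancel_left₀ (sub_ne_zero.2 hab.ne')]

/-- **Tightness criterion for the upcrossing inequality.** If a `P`-martingale a.s. never
takes values strictly between `a` and `b`, and every upcrossing is completed exactly at `b`
and every downcrossing exactly at `a`, then `E[U_t(a,b)] = (1/(b-a)) E[max{a - X_t, 0}]`
for every `t`. -/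
theorem tightness_criterion {A : Type*} [Fintype A] (hA : 1 < Fintype.card A)
    (P : @Measure (ℕ → A) (Finf A)) (hP : IsProbabilityMeasure P)
    (a b : ℝ) (hab : a < b)
    (X : ℕ → (ℕ → A) → ℝ) (hX : IsMartingale P X)
    (hgap : ∀ᵐ v ∂P, ∀ t : ℕ, X t v ≤ a ∨ b ≤ X t v)
    (hcross : ∀ᵐ v ∂P, ∀ k n : ℕ,
      (crossT (fun s => X s v) a b (2 * k + 1) = (n : ℕ∞) → X n v = a) ∧
      (crossT (fun s => X s v) a b (2 * k + 2) = (n : ℕ∞) → X n v = b)) :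
    ∀ t : ℕ,
      ∫⁻ v, ENat.toENNReal (upBefore (fun s => X s v) a b t) ∂P =
        ENNReal.ofReal ((1 / (b - a)) * ∫ v, max (a - X t v) 0 ∂P) :=
  tightness_criterion_general P hP a b hab X hX hgap hcross

end MartOsc
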